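/- For two pure states |ψ⟩ and |φ⟩ on a bipartite space H ⊗ H', the trace norm of the partial trace of the off-diagonal operator is bounded by 1: ‖Tr_H(|φ⟩⟨ψ|)‖_tr ≤ 1, where Tr_H denotes partial trace over the first factor. -/

import Mathlib

open Finset
open scoped ComplexOrder

noncomputable section

/-- The swap matrix on `H ⊗ H`. -/
def swapMatrix (ι : Type*) [Fintype ι] [DecidableEq ι] : Matrix (ι × ι) (ι × ι) ℂ :=
  Matrix.of fun p q => if p.1 = q.2 ∧ p.2 = q.1 then 1 else 0

/-- Partial trace over the first tensor factor. -/
def ptraceFst {ι κ : Type*} [Fintype ι] (M : Matrix (ι × κ) (ι × κ) ℂ) : Matrix κ κ ℂ :=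
  Matrix.of fun j j' => ∑ i, M (i, j) (i, j')

/-- Partial trace over the second tensor factor. -/
def ptraceSnd {ι κ : Type*} [Fintype κ] (M : Matrix (ι × κ) (ι × κ) ℂ) : Matrix ι ι ℂ :=
  Matrix.of fun i i' => ∑ j, M (i, j) (i', j)

/-- The outer product `|ψ⟩⟨φ|`. -/
def outer {n : Type*} (ψ φ : n → ℂ) : Matrix n n ℂ :=
  Matrix.of fun p q => ψ p * star (φ q)

/-- The square root of a positive semidefinite matrix, as defined in the older Mathlib
(`Matrix.PosSemidef.sqrt`, since removed). -/
def Matrix.PosSemidef.sqrt {n : Type*} [Fintype n] [DecidableEq n] {A : Matrix n n ℂ}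
    (hA : A.PosSemidef) : Matrix n n ℂ :=
  hA.1.eigenvectorUnitary.1 * Matrix.diagonal ((↑) ∘ (Real.sqrt ·) ∘ hA.1.eigenvalues) *
    (star hA.1.eigenvectorUnitary : Matrix n n ℂ)

/-- The trace norm `‖A‖_tr = Tr √(AᴴA)`. -/
def traceNorm {n : Type*} [Fintype n] [DecidableEq n] (A : Matrix n n ℂ) : ℝ :=
  ((Matrix.posSemidef_conjTranspose_mul_self A).sqrt.trace).re

/-- The trace distance between two states. -/
def traceDist {n : Type*} [Fintype n] [DecidableEq n] (ρ σ : Matrix n n ℂ) : ℝ :=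
  (1 / 2) * traceNorm (ρ - σ)

/-!
Write `φ = ∑ᵢ eᵢ ⊗ φᵢ` and `ψ = ∑ᵢ eᵢ ⊗ ψᵢ`, so that `Tr_H |φ⟩⟨ψ| = ∑ᵢ |φᵢ⟩⟨ψᵢ|`. By the singular
value decomposition, `‖M‖_tr = ∑ₙ Re ⟨uₙ, M vₙ⟩` for orthonormal families `(uₙ)`, `(vₙ)`; by
Cauchy–Schwarz and Bessel's inequality a rank-one term `|a⟩⟨b|` then contributes at most
`‖a‖ ‖b‖`. Hence `‖Tr_H |φ⟩⟨ψ|‖_tr ≤ ∑ᵢ ‖φᵢ‖ ‖ψᵢ‖ ≤ ‖φ‖ ‖ψ‖`.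
-/

universe u

open Matrix
open scoped InnerProductSpace

theorem Orthonormal.sum_norm_inner_mul_norm_inner_le {𝕜 E ν : Type*} [RCLike 𝕜]
    [NormedAddCommGroup E] [InnerProductSpace 𝕜 E] [Fintype ν] {u v : ν → E}
    (hu : Orthonormal 𝕜 u) (hv : Orthonormal 𝕜 v) (a b : E) :
    ∑ i, ‖⟪u i, a⟫_𝕜‖ * ‖⟪b, v i⟫_𝕜‖ ≤ ‖a‖ * ‖b‖ := by
  have bessel {w : ν → E} (hw : Orthonormal 𝕜 w) (x : E) : √(∑ i, ‖⟪w i, x⟫_𝕜‖ ^ 2) ≤ ‖x‖ :=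
    (Real.sqrt_le_sqrt (hw.sum_inner_products_le x)).trans_eq (Real.sqrt_sq (norm_nonneg x))
  calc ∑ i, ‖⟪u i, a⟫_𝕜‖ * ‖⟪b, v i⟫_𝕜‖
      ≤ √(∑ i, ‖⟪u i, a⟫_𝕜‖ ^ 2) * √(∑ i, ‖⟪v i, b⟫_𝕜‖ ^ 2) := by
        simp_rw [norm_inner_symm b]
        exact Real.sum_mul_le_sqrt_mul_sqrt _ _ _
    _ ≤ ‖a‖ * ‖b‖ := by gcongr <;> apply bessel <;> assumption

section
variable {κ : Type u} [Fintype κ] [DecidableEq κ]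

theorem traceNorm_eq_sum_sqrt_eigenvalues (M : Matrix κ κ ℂ) :
    traceNorm M = ∑ i, √((posSemidef_conjTranspose_mul_self M).1.eigenvalues i) := by
  set hH := (posSemidef_conjTranspose_mul_self M).1
  have hU : star (hH.eigenvectorUnitary : Matrix κ κ ℂ) * hH.eigenvectorUnitary = 1 :=
    Unitary.coe_star_mul_self hH.eigenvectorUnitary
  rw [traceNorm, PosSemidef.sqrt, trace_mul_cycle, hU, one_mul, trace_diagonal, Complex.re_sum]
  simp

theorem inner_toEuclideanLin_eigenvectorBasis (M : Matrix κ κ ℂ) (i j : κ) :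
    ⟪toEuclideanLin M ((posSemidef_conjTranspose_mul_self M).1.eigenvectorBasis i),
      toEuclideanLin M ((posSemidef_conjTranspose_mul_self M).1.eigenvectorBasis j)⟫_ℂ =
      if i = j then ((posSemidef_conjTranspose_mul_self M).1.eigenvalues i : ℂ) else 0 := by
  set hH := (posSemidef_conjTranspose_mul_self M).1
  have hv : toEuclideanLin Mᴴ (toEuclideanLin M (hH.eigenvectorBasis j)) =
      (hH.eigenvalues j : ℂ) • hH.eigenvectorBasis j := by
    ext k
    simpa [toLpLin_apply, mulVec_mulVec] using congrFun (hH.mulVec_eigenvectorBasis j) k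
  rw [← LinearMap.adjoint_inner_right, ← toEuclideanLin_conjTranspose_eq_adjoint, hv,
    inner_smul_right, orthonormal_iff_ite.mp hH.eigenvectorBasis.orthonormal]
  split_ifs with h <;> simp [h]

theorem exists_orthonormal_traceNorm_eq_sum_re_inner (M : Matrix κ κ ℂ) :
    ∃ (ν : Type u) (_ : Fintype ν) (u v : ν → EuclideanSpace ℂ κ), Orthonormal ℂ u ∧
      Orthonormal ℂ v ∧ traceNorm M = ∑ i, RCLike.re ⟪u i, toEuclideanLin M (v i)⟫_ℂ := by
  set hH := (posSemidef_conjTranspose_mul_self M).1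
  set σ : κ → ℝ := fun i => √(hH.eigenvalues i)
  have hσ_sq (i : κ) : (hH.eigenvalues i : ℂ) = σ i * σ i := by
    rw [← Complex.ofReal_mul,
      Real.mul_self_sqrt ((posSemidef_conjTranspose_mul_self M).eigenvalues_nonneg i)]
  -- right singular vectors: eigenvectors of `Mᴴ * M`; left ones: `M v / σ` where `σ ≠ 0`
  refine ⟨{i // σ i ≠ 0}, inferInstance,
    fun i => (σ i : ℂ)⁻¹ • toEuclideanLin M (hH.eigenvectorBasis i),
    fun i => hH.eigenvectorBasis i, ?_,
    hH.eigenvectorBasis.orthonormal.comp _ Subtype.val_injective, ?_⟩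
  · rw [orthonormal_iff_ite]
    intro i j
    have hi : (σ i : ℂ) ≠ 0 := Complex.ofReal_ne_zero.mpr i.2
    simp only [inner_smul_left, inner_smul_right, inner_toEuclideanLin_eigenvectorBasis,
      Subtype.ext_iff]
    split_ifs with h
    · obtain rfl : i = j := Subtype.ext h
      rw [hσ_sq, map_inv₀, Complex.conj_ofReal, inv_mul_cancel_left₀ hi, inv_mul_cancel₀ hi]
    · simp
  · rw [traceNorm_eq_sum_sqrt_eigenvalues, ← Finset.sum_filter_of_ne (p := fun i => σ i ≠ 0)
      (fun _ _ h => h), Finset.sum_subtype (p := fun i => σ i ≠ 0) _ fun _ => by simp]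
    refine Finset.sum_congr rfl fun i _ => ?_
    have hi : (σ i : ℂ) ≠ 0 := Complex.ofReal_ne_zero.mpr i.2
    rw [inner_smul_left, inner_toEuclideanLin_eigenvectorBasis, if_pos rfl, hσ_sq, map_inv₀,
      Complex.conj_ofReal, inv_mul_cancel_left₀ hi, RCLike.re_to_complex, Complex.ofReal_re]

theorem toEuclideanLin_outer (a b x : EuclideanSpace ℂ κ) :
    toEuclideanLin (outer a b) x = ⟪b, x⟫_ℂ • a := by
  ext j
  simp only [outer, toLpLin_apply, mulVec, dotProduct, of_apply,
    EuclideanSpace.inner_eq_star_dotProduct, Pi.star_apply, PiLp.smul_apply, smul_eq_mul, sum_mul]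
  exact Finset.sum_congr rfl fun _ _ => by ring

theorem traceNorm_sum_outer_le {ι : Type*} [Fintype ι] (a b : ι → EuclideanSpace ℂ κ) :
    traceNorm (∑ k, outer (a k) (b k)) ≤ ∑ k, ‖a k‖ * ‖b k‖ := by
  obtain ⟨ν, _, u, v, hu, hv, h⟩ := exists_orthonormal_traceNorm_eq_sum_re_inner
    (∑ k, outer (a k) (b k))
  have inner_eq (i : ν) : ⟪u i, toEuclideanLin (∑ k, outer (a k) (b k)) (v i)⟫_ℂ =
      ∑ k, ⟪b k, v i⟫_ℂ * ⟪u i, a k⟫_ℂ := by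
    simp only [map_sum, LinearMap.sum_apply, toEuclideanLin_outer, inner_sum, inner_smul_right]
  rw [h]
  calc ∑ i, RCLike.re ⟪u i, toEuclideanLin (∑ k, outer (a k) (b k)) (v i)⟫_ℂ
      ≤ ∑ i, ∑ k, ‖⟪u i, a k⟫_ℂ‖ * ‖⟪b k, v i⟫_ℂ‖ := by
        refine Finset.sum_le_sum fun i _ => ?_
        rw [inner_eq]
        refine (RCLike.re_le_norm _).trans ((norm_sum_le _ _).trans_eq ?_)
        simp only [norm_mul, mul_comm]
    _ = ∑ k, ∑ i, ‖⟪u i, a k⟫_ℂ‖ * ‖⟪b k, v i⟫_ℂ‖ := Finset.sum_comm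
    _ ≤ ∑ k, ‖a k‖ * ‖b k‖ :=
        Finset.sum_le_sum fun k _ => hu.sum_norm_inner_mul_norm_inner_le hv (a k) (b k)

end

theorem ptraceFst_outer {ι κ : Type*} [Fintype ι] (φ ψ : EuclideanSpace ℂ (ι × κ)) :
    ptraceFst (outer φ ψ) = ∑ i, outer (WithLp.toLp 2 (Function.curry φ i))
      (WithLp.toLp 2 (Function.curry ψ i)) := by
  ext j j'
  simp [ptraceFst, outer, Matrix.sum_apply]

section
variable {ι κ : Type*} [Fintype ι] [Fintype κ]

theorem EuclideanSpace.sum_norm_curry_sq (x : EuclideanSpace ℂ (ι × κ)) :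
    ∑ i, ‖WithLp.toLp 2 (Function.curry x i)‖ ^ 2 = ‖x‖ ^ 2 := by
  simp [EuclideanSpace.norm_sq_eq, Fintype.sum_prod_type]

theorem traceNorm_ptraceFst_outer_le [DecidableEq κ] (φ ψ : EuclideanSpace ℂ (ι × κ)) :
    traceNorm (ptraceFst (outer φ ψ)) ≤ ‖φ‖ * ‖ψ‖ := by
  rw [ptraceFst_outer]
  refine (traceNorm_sum_outer_le _ _).trans ((Real.sum_mul_le_sqrt_mul_sqrt _ _ _).trans_eq ?_)
  rw [EuclideanSpace.sum_norm_curry_sq, EuclideanSpace.sum_norm_curry_sq,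
    Real.sqrt_sq (norm_nonneg _), Real.sqrt_sq (norm_nonneg _)]

end

/-- For unit vectors `|ψ⟩, |φ⟩` in `H ⊗ H'`, the trace norm of the partial trace
(over the first factor) of `|φ⟩⟨ψ|` is at most 1. -/
theorem stmt_9 {ι κ : Type*} [Fintype ι] [Fintype κ] [DecidableEq κ]
    (ψ φ : EuclideanSpace ℂ (ι × κ)) (hψ : ‖ψ‖ = 1) (hφ : ‖φ‖ = 1) :
    traceNorm (ptraceFst (outer φ ψ)) ≤ 1 := by
  simpa [hψ, hφ] using traceNorm_ptraceFst_outer_le φ ψ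

end
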